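/- arXiv:2301.05084 — 5 statements merged into one kernel-verified Lean document; each statement's English description precedes it below -/
import Mathlib

section
/- Let X be a finite type and f : (X → ℚ) → ℚ. Then the following are equivalent: (1) f(a + b) = f(a) + f(b) for all a, b : X → ℚ (pointwise addition), f(a) ≤ f(b) whenever a(x) ≤ b(x) for all x ∈ X, and f applied to the constant-1 function equals 1; (2) there exists λ : X → ℚ with λ(i) ≥ 0 for all i ∈ X, Σ_{i∈X} λ(i) = 1, and f(x) = Σ_{i∈X} λ(i)·x(i) for all x : X → ℚ. -/
/-! An additive map between `ℚ`-vector spaces is automatically `ℚ`-linear, so `f` is determined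
by its values `λ i = f (Pi.single i 1)` on the standard basis. Monotonicity and `f 0 = 0` make
these weights nonnegative, and `f 1 = 1` makes them sum to `1`. -/

open Finset

variable {X : Type*} [DecidableEq X]

theorem map_eq_sum_smul_map_single_of_map_add [Fintype X] {M : Type*} [AddCommGroup M]
    [Module ℚ M] {f : (X → ℚ) → M} (hadd : ∀ a b, f (a + b) = f a + f b) (x : X → ℚ) :
    f x = ∑ i, x i • f (Pi.single i 1) := by
  have hsingle (i : X) : (Pi.single i 1 : X → ℚ) = fun j => if i = j then 1 else 0 := by
    ext j
    simp [Pi.single_apply, eq_comm]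
  simpa only [hsingle, AddMonoidHom.coe_toRatLinearMap, AddMonoidHom.mk'_apply] using
    (AddMonoidHom.mk' f hadd).toRatLinearMap.pi_apply_eq_sum_univ x

theorem map_single_nonneg_of_map_add_of_monotone {f : (X → ℚ) → ℚ}
    (hadd : ∀ a b, f (a + b) = f a + f b)
    (hmono : ∀ a b : X → ℚ, (∀ x, a x ≤ b x) → f a ≤ f b) (i : X) :
    0 ≤ f (Pi.single i 1) := by
  have hzero : f 0 = 0 := by simpa using hadd 0 0
  calc 0 = f 0 := hzero.symm
    _ ≤ f (Pi.single i 1) := hmono _ _ fun j => by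
      by_cases h : j = i <;> simp [h]

/-- **Statement 6.** Let `X` be a finite type and `f : (X → ℚ) → ℚ`.  Then `f`
is additive, monotone, and sends the constant-`1` function to `1` if and only
if there exists a rational probability distribution `λ` on `X` such that
`f x = ∑ i, λ i * x i` for all `x : X → ℚ`. -/
theorem additive_monotone_unital_iff_convex_combination
    (X : Type) [Fintype X] (f : (X → ℚ) → ℚ) :
    ((∀ a b : X → ℚ, f (a + b) = f a + f b) ∧
     (∀ a b : X → ℚ, (∀ x, a x ≤ b x) → f a ≤ f b) ∧
     f (fun _ => (1 : ℚ)) = 1) ↔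
    (∃ l : X → ℚ, (∀ i, 0 ≤ l i) ∧ (∑ i : X, l i = 1) ∧
      ∀ x : X → ℚ, f x = ∑ i : X, l i * x i) := by
  classical
  constructor
  · rintro ⟨hadd, hmono, hone⟩
    have hrepr (x : X → ℚ) : f x = ∑ i, f (Pi.single i 1) * x i := by
      simpa only [smul_eq_mul, mul_comm] using map_eq_sum_smul_map_single_of_map_add hadd x
    refine ⟨fun i => f (Pi.single i 1), map_single_nonneg_of_map_add_of_monotone hadd hmono,
      ?_, hrepr⟩
    simpa [hone] using (hrepr fun _ => 1).symm
  · rintro ⟨l, hl_nonneg, hl_sum, hf⟩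
    refine ⟨fun a b => ?_, fun a b hab => ?_, ?_⟩
    · simp only [hf, Pi.add_apply, mul_add, sum_add_distrib]
    · rw [hf, hf]
      exact sum_le_sum fun i _ => mul_le_mul_of_nonneg_left (hab i) (hl_nonneg i)
    · simp [hf, hl_sum]
end

section
/- Fix a set 𝒯 of finite types and a set 𝒮 of functions between members of 𝒯, let γ be a gadget into L-structures over (𝒯, 𝒮), and let B be an L-structure. If there exists an L-homomorphism from γ(P^{𝒯,𝒮}) to B, then for every label cover structure S supported on (𝒯, 𝒮) there exists an L-homomorphism from γ(S) to π_B(S). -/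
universe u v

/-- A *label cover structure* `S` consists of, for every finite type `Y`, a type
`S.elts Y` of elements of type `Y`, and, for every function `σ : Y → Z` between
finite types, a binary relation `S.rel σ` between elements of type `Y` and
elements of type `Z` (the constraints `E_σ`). -/
structure LabelCover : Type (u + 1) where
  elts : ∀ (Y : Type) [Fintype Y], Type u
  rel : ∀ {Y Z : Type} [Fintype Y] [Fintype Z], (Y → Z) → elts Y → elts Z → Prop

/-- A homomorphism of label cover structures: a family of maps preserving the
types of elements and all constraints. -/
structure LCHom (S : LabelCover.{u}) (T : LabelCover.{v}) where
  app : ∀ (Y : Type) [Fintype Y], S.elts Y → T.elts Y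
  map_rel : ∀ {Y Z : Type} [Fintype Y] [Fintype Z] (σ : Y → Z)
      (s : S.elts Y) (t : S.elts Z), S.rel σ s t → T.rel σ (app Y s) (app Z t)

open FirstOrder

/-- Pairs `(s, b)` of an element `s` of `S` of type `Y` together with a map
`b : Y → B`; these represent elements of the `L`-structure `π_B(S)` before
taking the quotient. -/
def PiBPair (S : LabelCover.{u}) (B : Type) : Type (max 1 u) :=
  Σ' (Y : Type) (iY : Fintype Y), @LabelCover.elts S Y iY × (Y → B)

/-- The identifications generating the equivalence relation defining `π_B(S)`:
`(t, b)` is identified with `(s, b ∘ σ)` for every constraint `(s, t) ∈ E_σ^S`. -/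
inductive PiBRel (S : LabelCover.{u}) (B : Type) : PiBPair S B → PiBPair S B → Prop
  | mk {Y Z : Type} (iY : Fintype Y) (iZ : Fintype Z) (σ : Y → Z)
      (s : @LabelCover.elts S Y iY) (t : @LabelCover.elts S Z iZ) (b : Z → B)
      (h : @LabelCover.rel S Y Z iY iZ σ s t) :
      PiBRel S B ⟨Y, iY, (s, b ∘ σ)⟩ ⟨Z, iZ, (t, b)⟩

/-- The carrier of the `L`-structure `π_B(S)`: the quotient of the set of pairs
`(s, b)` by the equivalence relation generated by identifying `(t, b)` with
`(s, b ∘ σ)` for every constraint `(s, t) ∈ E_σ^S`. -/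
def PiB (S : LabelCover.{u}) (B : Type) : Type (max 1 u) :=
  Quot (PiBRel S B)

/-- The class `[s; b]` as an element of `π_B(S)`. -/
def piBmk (S : LabelCover.{u}) {B : Type} {Y : Type} [iY : Fintype Y]
    (s : S.elts Y) (b : Y → B) : PiB S B :=
  Quot.mk _ ⟨Y, iY, (s, b)⟩

/-- The `L`-structure on `π_B(S)`: an `n`-ary relation symbol `R` holds on a
tuple if and only if the tuple can be written `([s; b 0], …, [s; b (n-1)])`
with a common element `s` of `S` of some type `Y` such that
`R^B (b 0 d, …, b (n-1) d)` holds for every `d : Y`. -/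
instance piBStructure (L : Language) [L.IsRelational] (S : LabelCover.{u}) (B : Type)
    [L.Structure B] : L.Structure (PiB S B) where
  funMap := fun f _ => isEmptyElim f
  RelMap := fun {n} R v =>
    ∃ (Y : Type) (iY : Fintype Y) (s : @LabelCover.elts S Y iY) (b : Fin n → Y → B),
      (∀ i, v i = Quot.mk _ ⟨Y, iY, (s, b i)⟩) ∧
      ∀ d : Y, Language.Structure.RelMap R (fun i => b i d)

/-- A *gadget* `γ` into `L`-structures over a set `Ty` of (finite) types and a
set `Fn` of functions between members of `Ty`: an `L`-structure `D Y` for every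
`Y ∈ Ty`, an `L`-structure `G σ` for every `σ ∈ Fn`, and `L`-homomorphisms
`p1 : D Y → G σ` and `p2 : D Z → G σ` for every `σ : Y → Z` in `Fn`. -/
structure Gadget (L : Language) (Ty : Type → Prop)
    (Fn : ∀ ⦃Y Z : Type⦄, (Y → Z) → Prop) where
  D : ∀ (Y : Type), Ty Y → Type
  strD : ∀ (Y : Type) (hY : Ty Y), L.Structure (D Y hY)
  G : ∀ {Y Z : Type} (σ : Y → Z), Fn σ → Type
  strG : ∀ {Y Z : Type} (σ : Y → Z) (hσ : Fn σ), L.Structure (G σ hσ)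
  p1 : ∀ {Y Z : Type} (σ : Y → Z) (hσ : Fn σ) (hY : Ty Y),
    @Language.Hom L (D Y hY) (G σ hσ) (strD Y hY) (strG σ hσ)
  p2 : ∀ {Y Z : Type} (σ : Y → Z) (hσ : Fn σ) (hZ : Ty Z),
    @Language.Hom L (D Z hZ) (G σ hσ) (strD Z hZ) (strG σ hσ)

/-- The disjoint union underlying `γ(S)`: one copy of `D Y` for every element
`s` of `S` of type `Y`, and one copy of `G σ` for every constraint
`(s, t) ∈ E_σ^S`. -/
def GammaCarrier {L : Language} {Ty : Type → Prop} {Fn : ∀ ⦃Y Z : Type⦄, (Y → Z) → Prop}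
    (g : Gadget L Ty Fn) (S : LabelCover.{u}) : Type (max 1 u) :=
  (Σ' (Y : Type) (iY : Fintype Y) (_s : @LabelCover.elts S Y iY) (hY : Ty Y), g.D Y hY) ⊕
  (Σ' (Y Z : Type) (iY : Fintype Y) (iZ : Fintype Z) (σ : Y → Z)
      (s : @LabelCover.elts S Y iY) (t : @LabelCover.elts S Z iZ)
      (_hst : @LabelCover.rel S Y Z iY iZ σ s t) (hσ : Fn σ), g.G σ hσ)

/-- The identifications generating the equivalence relation defining `γ(S)`:
for each constraint `c = (s, t) ∈ E_σ^S`, each element `d` of the copy of `D Y`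
at `s` is identified with `p1 σ d` in the copy of `G σ` at `c`, and each
element `e` of the copy of `D Z` at `t` is identified with `p2 σ e` in the copy
of `G σ` at `c`. -/
inductive GammaRel {L : Language} {Ty : Type → Prop} {Fn : ∀ ⦃Y Z : Type⦄, (Y → Z) → Prop}
    (g : Gadget L Ty Fn) (S : LabelCover.{u}) :
    GammaCarrier g S → GammaCarrier g S → Prop
  | glue1 {Y Z : Type} (iY : Fintype Y) (iZ : Fintype Z) (σ : Y → Z)
      (s : @LabelCover.elts S Y iY) (t : @LabelCover.elts S Z iZ)
      (hst : @LabelCover.rel S Y Z iY iZ σ s t) (hσ : Fn σ) (hY : Ty Y)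
      (d : g.D Y hY) :
      GammaRel g S (Sum.inl ⟨Y, iY, s, hY, d⟩)
        (Sum.inr ⟨Y, Z, iY, iZ, σ, s, t, hst, hσ, (@Language.Hom.toFun L (g.D Y hY) (g.G σ hσ) (g.strD Y hY) (g.strG σ hσ) (g.p1 σ hσ hY)) d⟩)
  | glue2 {Y Z : Type} (iY : Fintype Y) (iZ : Fintype Z) (σ : Y → Z)
      (s : @LabelCover.elts S Y iY) (t : @LabelCover.elts S Z iZ)
      (hst : @LabelCover.rel S Y Z iY iZ σ s t) (hσ : Fn σ) (hZ : Ty Z)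
      (e : g.D Z hZ) :
      GammaRel g S (Sum.inl ⟨Z, iZ, t, hZ, e⟩)
        (Sum.inr ⟨Y, Z, iY, iZ, σ, s, t, hst, hσ, (@Language.Hom.toFun L (g.D Z hZ) (g.G σ hσ) (g.strD Z hZ) (g.strG σ hσ) (g.p2 σ hσ hZ)) e⟩)

/-- The carrier of the `L`-structure `γ(S)`: the quotient of the disjoint union
of the copies by the equivalence generated by the gluing identifications. -/
def GammaS {L : Language} {Ty : Type → Prop} {Fn : ∀ ⦃Y Z : Type⦄, (Y → Z) → Prop}
    (g : Gadget L Ty Fn) (S : LabelCover.{u}) : Type (max 1 u) :=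
  Quot (GammaRel g S)

/-- The `L`-structure on `γ(S)`: a relation holds of a tuple if and only if the
tuple is the image under the quotient map of a tuple in the corresponding
relation of one of the copies. -/
instance gammaStructure (L : Language) [L.IsRelational] {Ty : Type → Prop}
    {Fn : ∀ ⦃Y Z : Type⦄, (Y → Z) → Prop} (g : Gadget L Ty Fn) (S : LabelCover.{u}) :
    L.Structure (GammaS g S) where
  funMap := fun f _ => isEmptyElim f
  RelMap := fun {n} R v =>
    (∃ (Y : Type) (iY : Fintype Y) (s : @LabelCover.elts S Y iY) (hY : Ty Y)
        (w : Fin n → g.D Y hY),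
        (@Language.Structure.RelMap L (g.D Y hY) (g.strD Y hY) n R w) ∧
        ∀ i, v i = Quot.mk _ (Sum.inl ⟨Y, iY, s, hY, w i⟩)) ∨
    (∃ (Y Z : Type) (iY : Fintype Y) (iZ : Fintype Z) (σ : Y → Z)
        (s : @LabelCover.elts S Y iY) (t : @LabelCover.elts S Z iZ)
        (hst : @LabelCover.rel S Y Z iY iZ σ s t) (hσ : Fn σ)
        (w : Fin n → g.G σ hσ),
        (@Language.Structure.RelMap L (g.G σ hσ) (g.strG σ hσ) n R w) ∧
        ∀ i, v i = Quot.mk _ (Sum.inr ⟨Y, Z, iY, iZ, σ, s, t, hst, hσ, w i⟩))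

/-- The restricted label cover template `P^{Ty,Fn}`: its elements of type `Y`
are the elements of `Y` itself when `Y ∈ Ty` (and there are none otherwise),
and `E_σ = { (y, σ y) : y ∈ Y }` for `σ ∈ Fn` (and is empty otherwise). -/
def restrictedLC (Ty : Type → Prop) (Fn : ∀ ⦃Y Z : Type⦄, (Y → Z) → Prop) :
    LabelCover.{0} where
  elts := fun Y [Fintype Y] => { _y : Y // Ty Y }
  rel := fun {Y Z} [Fintype Y] [Fintype Z] σ a b => Fn σ ∧ b.1 = σ a.1

/-- A label cover structure `S` is *supported on* `(Ty, Fn)` if it has no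
elements of types outside `Ty` and no constraints along functions outside
`Fn`. -/
def SupportedOn (S : LabelCover.{u}) (Ty : Type → Prop)
    (Fn : ∀ ⦃Y Z : Type⦄, (Y → Z) → Prop) : Prop :=
  (∀ (Y : Type) [Fintype Y], ¬ Ty Y → IsEmpty (S.elts Y)) ∧
  (∀ {Y Z : Type} [Fintype Y] [Fintype Z] (σ : Y → Z)
      (s : S.elts Y) (t : S.elts Z), S.rel σ s t → Fn σ)

/-!
A homomorphism `f : γ(P) → B` is applied fibrewise. An element `x` of the copy of the gadget
at `s ∈ S_Y` goes to `[s; y ↦ f xʸ]`, where `xʸ` is the same element in the copy at `y ∈ P_Y = Y`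
(for a copy of `G_σ` at a constraint `(s, t)`, the copy at the constraint `(y, σ y)` of `P`).
Gluings along `p¹` already hold in `γ(P)` at every `y`; a gluing along `p²` is seen at `t` on one
side and at `s` on the other, and is absorbed by the identification `[t; b] = [s; b ∘ σ]` of
`π_B(S)`. Relations are preserved because `f` preserves them at every `y`.
-/

instance Gadget.instStructureD {L : Language} {Ty : Type → Prop}
    {Fn : ∀ ⦃Y Z : Type⦄, (Y → Z) → Prop} (g : Gadget L Ty Fn) (Y : Type) (hY : Ty Y) :
    L.Structure (g.D Y hY) :=
  g.strD Y hY

instance Gadget.instStructureG {L : Language} {Ty : Type → Prop}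
    {Fn : ∀ ⦃Y Z : Type⦄, (Y → Z) → Prop} (g : Gadget L Ty Fn) {Y Z : Type} (σ : Y → Z)
    (hσ : Fn σ) : L.Structure (g.G σ hσ) :=
  g.strG σ hσ

theorem restrictedLC_rel_mk {Ty : Type → Prop} {Fn : ∀ ⦃Y Z : Type⦄, (Y → Z) → Prop}
    {Y Z : Type} [Fintype Y] [Fintype Z] {σ : Y → Z} (hσ : Fn σ) (hY : Ty Y) (hZ : Ty Z)
    (y : Y) : (restrictedLC Ty Fn).rel σ (⟨y, hY⟩ : {_y : Y // Ty Y}) ⟨σ y, hZ⟩ :=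
  ⟨hσ, rfl⟩

section PiB

variable {S : LabelCover.{u}} {B : Type}

theorem piBmk_comp {Y Z : Type} [Fintype Y] [Fintype Z] {σ : Y → Z} {s : S.elts Y}
    {t : S.elts Z} (hst : S.rel σ s t) (b : Z → B) :
    piBmk S s (b ∘ σ) = piBmk S t b :=
  Quot.sound (PiBRel.mk _ _ σ s t b hst)

theorem relMap_piBmk {L : Language} [L.IsRelational] [L.Structure B] {n : ℕ}
    (R : L.Relations n) {Y : Type} [Fintype Y] (s : S.elts Y) (b : Fin n → Y → B)
    (hb : ∀ y, Language.Structure.RelMap R fun i => b i y) :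
    Language.Structure.RelMap R fun i => piBmk S s (b i) :=
  ⟨Y, inferInstance, s, b, fun _ => rfl, hb⟩

end PiB

namespace GammaS

variable {L : Language} {Ty : Type → Prop} {Fn : ∀ ⦃Y Z : Type⦄, (Y → Z) → Prop}
  (g : Gadget L Ty Fn) {S : LabelCover.{u}}

def ofD {Y : Type} [iY : Fintype Y] (s : S.elts Y) (hY : Ty Y) (d : g.D Y hY) : GammaS g S :=
  Quot.mk _ (Sum.inl ⟨Y, iY, s, hY, d⟩)

def ofG {Y Z : Type} [iY : Fintype Y] [iZ : Fintype Z] {σ : Y → Z} {s : S.elts Y}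
    {t : S.elts Z} (hst : S.rel σ s t) (hσ : Fn σ) (e : g.G σ hσ) : GammaS g S :=
  Quot.mk _ (Sum.inr ⟨Y, Z, iY, iZ, σ, s, t, hst, hσ, e⟩)

variable {g}

theorem ofD_eq_ofG_p1 {Y Z : Type} [Fintype Y] [Fintype Z] {σ : Y → Z} {s : S.elts Y}
    {t : S.elts Z} (hst : S.rel σ s t) (hσ : Fn σ) (hY : Ty Y) (d : g.D Y hY) :
    ofD g s hY d = ofG g hst hσ (g.p1 σ hσ hY d) :=
  Quot.sound (GammaRel.glue1 _ _ σ s t hst hσ hY d)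

theorem ofD_eq_ofG_p2 {Y Z : Type} [Fintype Y] [Fintype Z] {σ : Y → Z} {s : S.elts Y}
    {t : S.elts Z} (hst : S.rel σ s t) (hσ : Fn σ) (hZ : Ty Z) (e : g.D Z hZ) :
    ofD g t hZ e = ofG g hst hσ (g.p2 σ hσ hZ e) :=
  Quot.sound (GammaRel.glue2 _ _ σ s t hst hσ hZ e)

variable (hFn : ∀ {Y Z : Type} (σ : Y → Z), Fn σ → Ty Y ∧ Ty Z) {B : Type}

def toPiBFun (f : GammaS g (restrictedLC Ty Fn) → B) : GammaCarrier g S → PiB S B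
  | .inl ⟨_, _, s, hY, d⟩ => piBmk S s fun y => f (ofD g ⟨y, hY⟩ hY d)
  | .inr ⟨_, _, _, _, σ, s, _, _, hσ, e⟩ =>
      piBmk S s fun y => f (ofG g (restrictedLC_rel_mk hσ (hFn σ hσ).1 (hFn σ hσ).2 y) hσ e)

theorem toPiBFun_respects (f : GammaS g (restrictedLC Ty Fn) → B) {a b : GammaCarrier g S}
    (hab : GammaRel g S a b) : toPiBFun hFn f a = toPiBFun hFn f b := by
  cases hab with
  | glue1 _ _ σ s _ _ hσ hY d =>
    exact congrArg (piBmk S s) <| funext fun y =>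
      congrArg f (ofD_eq_ofG_p1 (restrictedLC_rel_mk hσ hY (hFn σ hσ).2 y) hσ hY d)
  | glue2 _ _ σ s _ hst hσ hZ e =>
    refine (piBmk_comp hst _).symm.trans (congrArg (piBmk S s) <| funext fun y => ?_)
    exact congrArg f (ofD_eq_ofG_p2 (restrictedLC_rel_mk hσ (hFn σ hσ).1 hZ y) hσ hZ e)

variable [L.IsRelational]

theorem relMap_ofD {n : ℕ} (R : L.Relations n) {Y : Type} [Fintype Y] (s : S.elts Y)
    (hY : Ty Y) {w : Fin n → g.D Y hY} (hw : Language.Structure.RelMap R w) :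
    Language.Structure.RelMap R fun i => ofD g s hY (w i) :=
  Or.inl ⟨Y, inferInstance, s, hY, w, hw, fun _ => rfl⟩

theorem relMap_ofG {n : ℕ} (R : L.Relations n) {Y Z : Type} [Fintype Y] [Fintype Z]
    {σ : Y → Z} {s : S.elts Y} {t : S.elts Z} (hst : S.rel σ s t) (hσ : Fn σ)
    {w : Fin n → g.G σ hσ} (hw : Language.Structure.RelMap R w) :
    Language.Structure.RelMap R fun i => ofG g hst hσ (w i) :=
  Or.inr ⟨Y, Z, inferInstance, inferInstance, σ, s, t, hst, hσ, w, hw, fun _ => rfl⟩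

variable [L.Structure B]

def toPiB (f : GammaS g (restrictedLC Ty Fn) →[L] B) : GammaS g S →[L] PiB S B where
  toFun := Quot.lift (toPiBFun hFn f) fun _ _ => toPiBFun_respects hFn f
  map_fun' F := isEmptyElim F
  map_rel' R v := by
    rintro (⟨_, _, s, hY, w, hw, hv⟩ | ⟨_, _, _, _, _, s, _, _, hσ, w, hw, hv⟩) <;>
      obtain rfl : v = _ := funext hv
    · exact relMap_piBmk R s _ fun _ => f.map_rel R _ (relMap_ofD R _ hY hw)
    · exact relMap_piBmk R s _ fun _ => f.map_rel R _ (relMap_ofG R _ hσ hw)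

end GammaS

theorem gamma_hom_to_piB_general (L : Language) [L.IsRelational]
    (Ty : Type → Prop) (Fn : ∀ ⦃Y Z : Type⦄, (Y → Z) → Prop)
    (hFn : ∀ {Y Z : Type} (σ : Y → Z), Fn σ → Ty Y ∧ Ty Z)
    (g : Gadget L Ty Fn) (B : Type) [L.Structure B]
    (h : Nonempty (GammaS g (restrictedLC Ty Fn) →[L] B)) :
    ∀ S : LabelCover.{0}, SupportedOn S Ty Fn →
      Nonempty (GammaS g S →[L] PiB S B) :=
  fun _ _ => h.map (GammaS.toPiB hFn)

/-- Fix a set `Ty` of finite types and a set `Fn` of functions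
between members of `Ty`, let `γ` be a gadget into `L`-structures over
`(Ty, Fn)`, and let `B` be an `L`-structure.  If there is an `L`-homomorphism
from `γ(P^{Ty,Fn})` to `B`, then for every label cover structure `S` supported
on `(Ty, Fn)` there is an `L`-homomorphism from `γ(S)` to `π_B(S)`. -/
theorem gamma_hom_to_piB (L : Language) [L.IsRelational]
    (Ty : Type → Prop) (Fn : ∀ ⦃Y Z : Type⦄, (Y → Z) → Prop)
    (hTy : ∀ Y : Type, Ty Y → Finite Y)
    (hFn : ∀ {Y Z : Type} (σ : Y → Z), Fn σ → Ty Y ∧ Ty Z)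
    (g : Gadget L Ty Fn) (B : Type) [L.Structure B]
    (h : Nonempty (GammaS g (restrictedLC Ty Fn) →[L] B)) :
    ∀ S : LabelCover.{0}, SupportedOn S Ty Fn →
      Nonempty (GammaS g S →[L] PiB S B) :=
  gamma_hom_to_piB_general L Ty Fn hFn g B h
end

section
/- Let L be a purely relational first-order language, let 𝔛, A, B be L-structures, and let k ≥ 1. If there exists an L-homomorphism from 𝔛 to A, then there exists an L-homomorphism from κ(𝔛) to B, where κ(𝔛) is the output of the k-consistency reduction built from the greatest consistent system of partial homomorphisms from 𝔛 to A and from powers of B, as defined in the context. -/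
/-! A homomorphism `φ : 𝔛 → A` restricts to a partial homomorphism on every `K`, and these
restrictions form a consistent system, so `φ|_K ∈ 𝓕_K` for every `K`. Evaluating at `φ` is
compatible with the identifications `[K; b ∘ ρ_{K,K'}] = [K'; b]`, since `ρ_{K,K'}(φ|_K) = φ|_{K'}`,
so `[K; b] ↦ b (φ|_K)` is a well-defined map `κ(𝔛) → B`; it preserves relations because a
relation in `κ(𝔛)` holds of a tuple over a common `K` at every `f ∈ 𝓕_K`, in particular at
`φ|_K`. -/

open FirstOrder

/-- Restriction of a function defined on a subset `K` to a subset `K' ⊆ K`. -/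
def restrictDom {X A : Type} {K K' : Set X} (h : K' ⊆ K) (f : ↥K → A) : ↥K' → A :=
  fun y => f ⟨y.1, h y.2⟩

/-- A map `f : K → A` defined on a subset `K` of (the carrier of) an
`L`-structure `𝔛` is a *partial homomorphism* to `A` if it preserves every
relation all of whose arguments lie in `K`. -/
def IsPartialHom (L : Language) (𝔛 A : Type) [L.Structure 𝔛] [L.Structure A]
    (K : Set 𝔛) (f : ↥K → A) : Prop :=
  ∀ {n : ℕ} (R : L.Relations n) (v : Fin n → 𝔛) (hv : ∀ i, v i ∈ K),
    Language.Structure.RelMap R v → Language.Structure.RelMap R (fun i => f ⟨v i, hv i⟩)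

/-- A *consistent system* (with parameter `k`): a family `F` assigning to each
subset `K` of the carrier of `𝔛` with at most `k` elements a set `F K` of
partial homomorphisms from `K` to `A` such that, for all `K' ⊆ K` with
`|K| ≤ k`, restrictions of members of `F K` belong to `F K'` and every member
of `F K'` extends to a member of `F K`. -/
def IsConsistentSystem (L : Language) (𝔛 A : Type) [L.Structure 𝔛] [L.Structure A]
    (k : ℕ) (F : ∀ K : Set 𝔛, Set ((↥K : Type) → A)) : Prop :=
  (∀ K : Set 𝔛, K.encard ≤ k → ∀ f ∈ F K, IsPartialHom L 𝔛 A K f) ∧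
  (∀ (K K' : Set 𝔛), K.encard ≤ k → ∀ (h : K' ⊆ K),
    (∀ f ∈ F K, restrictDom h f ∈ F K') ∧
    (∀ g ∈ F K', ∃ f ∈ F K, restrictDom h f = g))

/-- The greatest consistent system (consistent systems are closed under
pointwise unions): `gcs L 𝔛 A k K` is the union of `F K` over all consistent
systems `F`. -/
def gcs (L : Language) (𝔛 A : Type) [L.Structure 𝔛] [L.Structure A] (k : ℕ)
    (K : Set 𝔛) : Set ((↥K : Type) → A) :=
  { f | ∃ F, IsConsistentSystem L 𝔛 A k F ∧ f ∈ F K }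

/-- Members of the greatest consistent system restrict to members of the
greatest consistent system. -/
theorem gcs_restrict_mem (L : Language) (𝔛 A : Type) [L.Structure 𝔛] [L.Structure A]
    (k : ℕ) {K K' : Set 𝔛} (hK : K.encard ≤ k) (h : K' ⊆ K)
    {f : (↥K : Type) → A} (hf : f ∈ gcs L 𝔛 A k K) :
    restrictDom h f ∈ gcs L 𝔛 A k K' := by
  obtain ⟨F, hF, hfF⟩ := hf
  exact ⟨F, hF, (hF.2 K K' hK h).1 f hfF⟩

/-- Pairs `(K, b)` with `K` a subset of the carrier of `𝔛` of at most `k`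
elements and `b : 𝓕_K → B`, where `𝓕` is the greatest consistent system; these
represent elements of `κ(𝔛)` before taking the quotient. -/
def KappaPair (L : Language) (𝔛 A B : Type) [L.Structure 𝔛] [L.Structure A] (k : ℕ) :
    Type :=
  Σ' (K : Set 𝔛) (_ : K.encard ≤ k), ((↥(gcs L 𝔛 A k K) : Type) → B)

/-- The identifications generating the equivalence relation defining `κ(𝔛)`:
`(K, b ∘ ρ)` is identified with `(K', b)` for all `K' ⊆ K` and `b : 𝓕_{K'} → B`,
where `ρ : 𝓕_K → 𝓕_{K'}` is the restriction map. -/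
inductive KappaRel (L : Language) (𝔛 A B : Type) [L.Structure 𝔛] [L.Structure A]
    (k : ℕ) : KappaPair L 𝔛 A B k → KappaPair L 𝔛 A B k → Prop
  | mk (K K' : Set 𝔛) (hK : K.encard ≤ k) (h : K' ⊆ K)
      (b : (↥(gcs L 𝔛 A k K') : Type) → B) :
      KappaRel L 𝔛 A B k
        ⟨K, hK, fun f => b ⟨restrictDom h f.1, gcs_restrict_mem L 𝔛 A k hK h f.2⟩⟩
        ⟨K', (Set.encard_mono h).trans hK, b⟩

/-- The carrier of `κ(𝔛)`, the output of the `k`-consistency reduction built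
from the greatest consistent system of partial homomorphisms from `𝔛` to `A`
and from powers of `B`. -/
def Kappa (L : Language) (𝔛 A B : Type) [L.Structure 𝔛] [L.Structure A] (k : ℕ) :
    Type :=
  Quot (KappaRel L 𝔛 A B k)

/-- The `L`-structure on `κ(𝔛)`: an `n`-ary relation symbol `R` holds of a
tuple if and only if the tuple can be written `([K; b 0], …, [K; b (n-1)])`
with a common `K` such that `R^B (b 0 f, …, b (n-1) f)` holds for every
`f ∈ 𝓕_K`. -/
instance kappaStructure (L : Language) [L.IsRelational] (𝔛 A B : Type)
    [L.Structure 𝔛] [L.Structure A] [L.Structure B] (k : ℕ) :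
    L.Structure (Kappa L 𝔛 A B k) where
  funMap := fun f _ => isEmptyElim f
  RelMap := fun {n} R v =>
    ∃ (K : Set 𝔛) (hK : K.encard ≤ k)
      (w : Fin n → ((↥(gcs L 𝔛 A k K) : Type) → B)),
      (∀ i, v i = Quot.mk _ ⟨K, hK, w i⟩) ∧
      ∀ f : ↥(gcs L 𝔛 A k K), Language.Structure.RelMap R (fun i => w i f)

open Language

section RestrictHom

variable {L : Language} {𝔛 A : Type} [L.Structure 𝔛] [L.Structure A]

theorem isPartialHom_restrict (φ : 𝔛 →[L] A) (K : Set 𝔛) :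
    IsPartialHom L 𝔛 A K (fun x => φ x) :=
  fun R v _ hR => φ.map_rel R v hR

theorem isConsistentSystem_restrict (φ : 𝔛 →[L] A) (k : ℕ) :
    IsConsistentSystem L 𝔛 A k (fun K => {fun x : K => φ x}) := by
  refine ⟨?_, fun _ _ _ _ => ⟨?_, ?_⟩⟩
  · rintro K - f rfl
    exact isPartialHom_restrict φ K
  · rintro f rfl
    rfl
  · rintro g rfl
    exact ⟨_, rfl, rfl⟩

theorem restrict_mem_gcs (φ : 𝔛 →[L] A) (k : ℕ) (K : Set 𝔛) :
    (fun x : K => φ x) ∈ gcs L 𝔛 A k K :=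
  ⟨_, isConsistentSystem_restrict φ k, rfl⟩

end RestrictHom

section KappaEval

variable {L : Language} {𝔛 A : Type} (B : Type) [L.Structure 𝔛] [L.Structure A]

/-- The map `[K; b] ↦ b (φ|_K)` from `κ(𝔛)` to `B`. -/
def kappaEval (φ : 𝔛 →[L] A) (k : ℕ) : Kappa L 𝔛 A B k → B :=
  Quot.lift (fun p : KappaPair L 𝔛 A B k => p.2.2 ⟨fun x => φ x, restrict_mem_gcs φ k p.1⟩)
    (by rintro _ _ ⟨⟩; rfl)

variable [L.IsRelational] [L.Structure B]

theorem kappaEval_map_rel (φ : 𝔛 →[L] A) (k : ℕ) {n : ℕ} (R : L.Relations n)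
    (v : Fin n → Kappa L 𝔛 A B k) (hR : Structure.RelMap R v) :
    Structure.RelMap R (kappaEval B φ k ∘ v) := by
  obtain ⟨K, hK, w, hv, hw⟩ := hR
  have hv' : kappaEval B φ k ∘ v = fun i => w i ⟨fun x => φ x, restrict_mem_gcs φ k K⟩ :=
    funext fun i => congrArg (kappaEval B φ k) (hv i)
  rw [hv']
  exact hw _

def kappaHom (φ : 𝔛 →[L] A) (k : ℕ) : Kappa L 𝔛 A B k →[L] B where
  toFun := kappaEval B φ k
  map_fun' := fun f => isEmptyElim f
  map_rel' := kappaEval_map_rel B φ k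

end KappaEval

theorem kappa_completeness_general (L : Language) [L.IsRelational] (𝔛 A B : Type)
    [L.Structure 𝔛] [L.Structure A] [L.Structure B] (k : ℕ)
    (h : Nonempty (𝔛 →[L] A)) :
    Nonempty (Kappa L 𝔛 A B k →[L] B) :=
  h.map (kappaHom B · k)

/-- **Statement 10.** Let `L` be a purely relational first-order language,
`𝔛, A, B` be `L`-structures, and `k ≥ 1`.  If there is an `L`-homomorphism from
`𝔛` to `A`, then there is an `L`-homomorphism from `κ(𝔛)` to `B`
(completeness of the `k`-consistency reduction). -/
theorem kappa_completeness (L : Language) [L.IsRelational] (𝔛 A B : Type)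
    [L.Structure 𝔛] [L.Structure A] [L.Structure B] (k : ℕ) (hk : 1 ≤ k)
    (h : Nonempty (𝔛 →[L] A)) :
    Nonempty (Kappa L 𝔛 A B k →[L] B) :=
  kappa_completeness_general L 𝔛 A B k h
end

section
/- Let X be a set, k ≥ 1, A a set, and for each finite subset K of X with at most k elements let 𝓕_K be a finite set of functions K → A. Suppose that rational numbers x_{K,f} ≥ 0, given for every such K and every f ∈ 𝓕_K, satisfy Σ_{f∈𝓕_K} x_{K,f} = 1 for every such K, and Σ_{f∈𝓕_K : f|_L = g} x_{K,f} = x_{L,g} for all subsets L ⊊ K (|K| ≤ k) and all g ∈ 𝓕_L. Then the family 𝓕'_K := { f ∈ 𝓕_K : x_{K,f} > 0 } is a nonempty consistent system: each 𝓕'_K is nonempty, and for all L ⊊ K with |K| ≤ k, the restriction f|_L belongs to 𝓕'_L for every f ∈ 𝓕'_K, and every g ∈ 𝓕'_L equals f|_L for some f ∈ 𝓕'_K. -/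
open Classical

/-- Restriction of a function on (the coercion of) a finite subset `K` to a
subset `L ⊆ K`. -/
def restrictFinset {X A : Type} {L K : Finset X} (h : L ⊆ K)
    (f : (↥K : Type) → A) : (↥L : Type) → A :=
  fun y => f ⟨y.1, h y.2⟩

/-!
The marginal equations say that `x L` is the push-forward of `x K` along restriction to `L`.
Since both have total mass `1` and `x K` is nonnegative, no mass of `x K` can sit on a
function whose restriction lies outside `𝓕 L`; so restriction maps the support of `x K` into
`𝓕 L`, where each `x L g` is the total weight of the fibre over `g`, which is positive exactly
when the fibre meets the support of `x K`.
-/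

namespace Finset

variable {α β M : Type*} [DecidableEq β] [AddCommMonoid M] [LinearOrder M]
  {s : Finset α} {t : Finset β} {φ : α → β} {w : α → M} {v : β → M} {a : α}

theorem map_mem_of_pos_of_sum_fiber_eq [IsOrderedCancelAddMonoid M] (hw : ∀ i ∈ s, 0 ≤ w i)
    (hfiber : ∀ j ∈ t, ∑ i ∈ s with φ i = j, w i = v j)
    (htotal : ∑ i ∈ s, w i = ∑ j ∈ t, v j) (ha : a ∈ s) (hpos : 0 < w a) : φ a ∈ t := by
  by_contra hφa
  have hlt : ∑ i ∈ s with φ i ∈ t, w i < ∑ i ∈ s, w i :=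
    sum_lt_sum_of_subset (filter_subset _ _) ha (by simp [hφa]) hpos fun i hi _ => hw i hi
  rw [← sum_fiberwise_eq_sum_filter, sum_congr rfl hfiber, htotal] at hlt
  exact lt_irrefl _ hlt

theorem pos_of_pos_of_sum_fiber_eq [IsOrderedAddMonoid M] (hw : ∀ i ∈ s, 0 ≤ w i)
    (hfiber : ∑ i ∈ s with φ i = φ a, w i = v (φ a)) (ha : a ∈ s) (hpos : 0 < w a) :
    0 < v (φ a) := by
  rw [← hfiber]
  exact hpos.trans_le <|
    single_le_sum (fun i hi => hw i (mem_filter.1 hi).1) (mem_filter.2 ⟨ha, rfl⟩)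

theorem exists_pos_of_pos_of_sum_fiber_eq [IsOrderedAddMonoid M] {b : β}
    (hfiber : ∑ i ∈ s with φ i = b, w i = v b) (hpos : 0 < v b) :
    ∃ i ∈ s, 0 < w i ∧ φ i = b := by
  rw [← hfiber] at hpos
  obtain ⟨i, hi, hwi⟩ := exists_lt_of_sum_lt (sum_const_zero.trans_lt hpos)
  exact ⟨i, (mem_filter.1 hi).1, hwi, (mem_filter.1 hi).2⟩

end Finset

open Finset in
theorem sherali_adams_support_is_consistent_general
    (X A : Type) (k : ℕ)
    (𝓕 : ∀ K : Finset X, Finset ((↥K : Type) → A))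
    (x : ∀ K : Finset X, ((↥K : Type) → A) → ℚ)
    (hnonneg : ∀ (K : Finset X), K.card ≤ k → ∀ f ∈ 𝓕 K, 0 ≤ x K f)
    (hsum : ∀ (K : Finset X), K.card ≤ k → ∑ f ∈ 𝓕 K, x K f = 1)
    (hmarg : ∀ (K L : Finset X), K.card ≤ k → ∀ (hLK : L ⊂ K), ∀ g ∈ 𝓕 L,
      (∑ f ∈ 𝓕 K, if restrictFinset hLK.subset f = g then x K f else 0) = x L g) :
    (∀ (K : Finset X), K.card ≤ k → ∃ f ∈ 𝓕 K, 0 < x K f) ∧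
    (∀ (K L : Finset X), K.card ≤ k → ∀ (hLK : L ⊂ K),
      (∀ f ∈ 𝓕 K, 0 < x K f →
        restrictFinset hLK.subset f ∈ 𝓕 L ∧ 0 < x L (restrictFinset hLK.subset f)) ∧
      (∀ g ∈ 𝓕 L, 0 < x L g →
        ∃ f ∈ 𝓕 K, 0 < x K f ∧ restrictFinset hLK.subset f = g)) := by
  refine ⟨fun K hK => exists_lt_of_sum_lt (by simp [hsum K hK]), fun K L hK hLK => ?_⟩
  have hL : L.card ≤ k := (card_lt_card hLK).le.trans hK
  have hfiber : ∀ g ∈ 𝓕 L, ∑ f ∈ 𝓕 K with restrictFinset hLK.subset f = g, x K f = x L g :=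
    fun g hg => (sum_filter _ _).trans (hmarg K L hK hLK g hg)
  have hmem : ∀ f ∈ 𝓕 K, 0 < x K f → restrictFinset hLK.subset f ∈ 𝓕 L := fun _ hf hpos =>
    map_mem_of_pos_of_sum_fiber_eq (hnonneg K hK) hfiber (by rw [hsum K hK, hsum L hL]) hf hpos
  refine ⟨fun f hf hpos => ⟨hmem f hf hpos, ?_⟩, fun g hg hpos => ?_⟩
  · exact pos_of_pos_of_sum_fiber_eq (hnonneg K hK) (hfiber _ (hmem f hf hpos)) hf hpos
  · exact exists_pos_of_pos_of_sum_fiber_eq (hfiber g hg) hpos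

/-- **Statement 11.** Let `X` be a set, `k ≥ 1`, `A` a set, and for each finite
subset `K` of `X` with at most `k` elements let `𝓕 K` be a finite set of
functions `K → A`.  If nonnegative rationals `x K f` (for `f ∈ 𝓕 K`) satisfy
the `k`-th level Sherali–Adams system — `∑ f ∈ 𝓕 K, x K f = 1` for every such
`K`, and `∑_{f ∈ 𝓕 K, f|_L = g} x K f = x L g` for all `L ⊊ K` and `g ∈ 𝓕 L` —
then the family `𝓕' K = { f ∈ 𝓕 K : x K f > 0 }` is a nonempty consistent
system: each `𝓕' K` is nonempty, restrictions of members of `𝓕' K` belong to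
`𝓕' L`, and every member of `𝓕' L` is the restriction of a member of `𝓕' K`. -/
theorem sherali_adams_support_is_consistent
    (X A : Type) (k : ℕ) (hk : 1 ≤ k)
    (𝓕 : ∀ K : Finset X, Finset ((↥K : Type) → A))
    (x : ∀ K : Finset X, ((↥K : Type) → A) → ℚ)
    (hnonneg : ∀ (K : Finset X), K.card ≤ k → ∀ f ∈ 𝓕 K, 0 ≤ x K f)
    (hsum : ∀ (K : Finset X), K.card ≤ k → ∑ f ∈ 𝓕 K, x K f = 1)
    (hmarg : ∀ (K L : Finset X), K.card ≤ k → ∀ (hLK : L ⊂ K), ∀ g ∈ 𝓕 L,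
      (∑ f ∈ 𝓕 K, if restrictFinset hLK.subset f = g then x K f else 0) = x L g) :
    (∀ (K : Finset X), K.card ≤ k → ∃ f ∈ 𝓕 K, 0 < x K f) ∧
    (∀ (K L : Finset X), K.card ≤ k → ∀ (hLK : L ⊂ K),
      (∀ f ∈ 𝓕 K, 0 < x K f →
        restrictFinset hLK.subset f ∈ 𝓕 L ∧ 0 < x L (restrictFinset hLK.subset f)) ∧
      (∀ g ∈ 𝓕 L, 0 < x L g →
        ∃ f ∈ 𝓕 K, 0 < x K f ∧ restrictFinset hLK.subset f = g)) :=
  sherali_adams_support_is_consistent_general X A k 𝓕 x hnonneg hsum hmarg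
end

section
/- Let X be a finite type and π : X → X a map satisfying π(π(x)) = x and π(x) ≠ x for all x ∈ X (a fixed-point-free involution). Then there is no function f : (X → Bool) → Bool satisfying both f(¬ ∘ x) = ¬ f(x) for all x : X → Bool and f(x ∘ π) = f(x) for all x : X → Bool. -/
/-! Colour each point `i` by whether it precedes its partner `π i` in a well-ordering of `X`.
Since `π` is a fixed-point-free involution, exactly one of `i`, `π i` precedes the other, so this
colouring `x` satisfies `x ∘ π = ¬ ∘ x`. A self-dual `π`-invariant `f` would then give
`f x = f (x ∘ π) = f (¬ ∘ x) = ¬ f x`. -/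

theorem Function.Involutive.exists_comp_eq_not {X : Type*} {π : X → X}
    (hinv : Function.Involutive π) (hfpf : ∀ i, π i ≠ i) :
    ∃ x : X → Bool, x ∘ π = fun i => !x i := by
  classical
  refine ⟨fun i => decide (WellOrderingRel i (π i)), funext fun i => ?_⟩
  have hne : i ≠ π i := (hfpf i).symm
  simp only [Function.comp_apply, hinv i]
  rcases trichotomous_of WellOrderingRel i (π i) with hlt | heq | hgt
  · simp [hlt, asymm hlt]
  · exact absurd heq hne
  · simp [hgt, asymm hgt]

theorem no_selfdual_invariant_under_fpf_involution_general
    (X : Type) (π : X → X)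
    (hinv : ∀ x, π (π x) = x) (hfpf : ∀ x, π x ≠ x) :
    ¬ ∃ f : (X → Bool) → Bool,
        (∀ x : X → Bool, f (fun i => ! x i) = ! f x) ∧
        (∀ x : X → Bool, f (x ∘ π) = f x) := by
  rintro ⟨f, hselfdual, hinvariant⟩
  obtain ⟨x, hx⟩ := Function.Involutive.exists_comp_eq_not hinv hfpf
  have : f x = !f x := calc
    f x = f (x ∘ π) := (hinvariant x).symm
    _ = f (fun i => !x i) := by rw [hx]
    _ = !f x := hselfdual x
  exact Bool.not_ne_self (f x) this.symm

/-- **Statement 14.** Let `X` be a finite type and `π : X → X` a fixed-point-free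
involution.  Then there is no function `f : (X → Bool) → Bool` which is both
self-dual (`f (¬ ∘ x) = ¬ f x` for all `x`) and invariant under permuting its
coordinates by `π` (`f (x ∘ π) = f x` for all `x`). -/
theorem no_selfdual_invariant_under_fpf_involution
    (X : Type) [Fintype X] (π : X → X)
    (hinv : ∀ x, π (π x) = x) (hfpf : ∀ x, π x ≠ x) :
    ¬ ∃ f : (X → Bool) → Bool,
        (∀ x : X → Bool, f (fun i => ! x i) = ! f x) ∧
        (∀ x : X → Bool, f (x ∘ π) = f x) :=
  no_selfdual_invariant_under_fpf_involution_general X π hinv hfpf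
end
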